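/- arXiv:2205.02353 — 4 statements merged into one kernel-verified Lean document; each statement's English description precedes it below -/
import Mathlib

section
/- Let A be a small category with a terminal object t. Then the commutative square in Cat whose top functor 𝟙 ⥤ A picks out t, whose left functor 𝟙 ⥤ 𝟚 picks out the object 0, whose right functor is the canonical inclusion A ↪ A▷, and whose bottom functor 𝟚 ⥤ A▷ sends the unique nonidentity arrow of 𝟚 to the canonical arrow from (the image of) t to the new terminal object of A▷, is a pushout square in the category Cat of small categories. -/
/-!
A functor `A▷ ⥤ C` amounts to a functor `F : A ⥤ C` together with a compatible family of arrows
`F x ⟶ c` into a single object. When `t` is terminal in `A`, such a family is determined by its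
component at `t`, which can be any arrow `F t ⟶ c`, i.e. any functor `𝟚 ⥤ C` starting at `F t`.
So functors out of `A▷` are exactly the compatible pairs of functors out of `A` and `𝟚`.
-/

open CategoryTheory Limits

theorem CategoryTheory.Functor.const_obj_comp {J A C : Type*} [Category* J] [Category* A]
    [Category* C] (a : A) (F : A ⥤ C) :
    (Functor.const J).obj a ⋙ F = (Functor.const J).obj (F.obj a) :=
  Functor.ext (fun _ => rfl) fun _ _ _ => by simp

namespace CategoryTheory.WithTerminal

variable {A : Type*} [Category* A] {t : A} {C : Type*} [Category* C]

def liftOfIsTerminal (ht : IsTerminal t) (F : A ⥤ C) {c : C} (g : F.obj t ⟶ c) :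
    WithTerminal A ⥤ C :=
  lift F (fun x => F.map (ht.from x) ≫ g) fun x y f => by
    rw [← F.map_comp_assoc, ht.hom_ext (f ≫ ht.from y)]

theorem incl_comp_liftOfIsTerminal (ht : IsTerminal t) (F : A ⥤ C) {c : C}
    (g : F.obj t ⟶ c) : incl ⋙ liftOfIsTerminal ht F g = F :=
  Functor.ext_of_iso (inclLift _ _ _) (fun _ => rfl) (fun _ => rfl)

theorem mk₁_comp_liftOfIsTerminal (ht : IsTerminal t) (F : A ⥤ C) (X : ComposableArrows C 1)
    (e : F.obj t = X.left) :
    ComposableArrows.mk₁ (starTerminal.from (incl.obj t)) ⋙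
      liftOfIsTerminal ht F (eqToHom e ≫ X.hom) = X := by
  refine Eq.trans (b := ComposableArrows.mk₁ (eqToHom e ≫ X.hom))
    (ComposableArrows.ext₁ rfl rfl ?_) ((ComposableArrows.mk₁_eqToHom_comp e X.hom).trans X.mk₁_hom)
  change F.map (ht.from t) ≫ _ = 𝟙 _ ≫ _ ≫ 𝟙 _
  simp

theorem functor_ext_of_isTerminal (ht : IsTerminal t) {G G' : WithTerminal A ⥤ C}
    (h₁ : incl ⋙ G = incl ⋙ G')
    (h₂ : ComposableArrows.mk₁ (starTerminal.from (incl.obj t)) ⋙ G =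
      ComposableArrows.mk₁ (starTerminal.from (incl.obj t)) ⋙ G') : G = G' := by
  have hobj : ∀ X, G.obj X = G'.obj X
    | of x => Functor.congr_obj h₁ x
    | star => Functor.congr_obj h₂ 1
  refine Functor.hext hobj fun X Y f => ?_
  rcases X with x | _ <;> rcases Y with y | _
  · exact Functor.hcongr_hom h₁ f
  · have hf : f = incl.map (ht.from x) ≫ starTerminal.from (incl.obj t) := Subsingleton.elim _ _
    rw [hf]
    refine (G.map_comp _ _).heq.trans (HEq.trans ?_ (G'.map_comp _ _).symm.heq)
    exact heq_comp (hobj _) (hobj _) (hobj _) (Functor.hcongr_hom h₁ _)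
      (Functor.hcongr_hom h₂ (homOfLE (by decide : (0 : Fin 2) ≤ 1)))
  · exact (false_of_from_star f).elim
  · obtain rfl : f = 𝟙 _ := Subsingleton.elim _ _
    rw [G.map_id, G'.map_id, hobj star]

end CategoryTheory.WithTerminal

open WithTerminal

/-- Let `A` be a small category with a terminal object `t`.  The square in `Cat`
whose top functor `𝟙 ⥤ A` picks out `t`, whose left functor `𝟙 ⥤ 𝟚` picks out `0`
(where `𝟙 = Fin 1` is the terminal category and `𝟚 = Fin 2` is the poset `{0 < 1}`),
whose right functor is the canonical inclusion `A ↪ A▷ = WithTerminal A`, and whose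
bottom functor `𝟚 ⥤ A▷` sends the unique nonidentity arrow of `𝟚` to the canonical
arrow from `t` to the new terminal object, is a pushout square in `Cat`. -/
theorem isPushout_withTerminal (A : Type) [SmallCategory A] (t : A)
    (ht : Limits.IsTerminal t) :
    IsPushout (C := Cat.{0,0}) (Z := Cat.of (Fin 1)) (X := Cat.of A) (Y := Cat.of (Fin 2))
      (P := Cat.of (WithTerminal A))
      ((Functor.const (Fin 1)).obj t).toCatHom
      ((Functor.const (Fin 1)).obj (0 : Fin 2)).toCatHom
      WithTerminal.incl.toCatHom
      (ComposableArrows.mk₁ (WithTerminal.starTerminal.from (WithTerminal.incl.obj t))).toCatHom := by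
  refine IsPushout.of_isColimit'
    ⟨Cat.ext ((Functor.const_obj_comp _ _).trans (Functor.const_obj_comp _ _).symm)⟩ <|
    PushoutCocone.IsColimit.mk _
      (fun s => (liftOfIsTerminal ht s.inl.toFunctor
        (eqToHom (Functor.congr_obj (congrArg Cat.Hom.toFunctor s.condition) (0 : Fin 1)) ≫
          ComposableArrows.hom (n := 1) s.inr.toFunctor)).toCatHom)
      (fun s => Cat.ext (incl_comp_liftOfIsTerminal ..))
      (fun s => Cat.ext (mk₁_comp_liftOfIsTerminal ..))
      (fun s m hl hr => Cat.ext (functor_ext_of_isTerminal ht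
        ((congrArg Cat.Hom.toFunctor hl).trans (incl_comp_liftOfIsTerminal ..).symm)
        ((congrArg Cat.Hom.toFunctor hr).trans (mk₁_comp_liftOfIsTerminal ..).symm)))
end

section
/- Let I : A ↪ B be a Dwyer map with complementary cosieve V ⊆ B, let F : A ⥤ C be any functor, and suppose the square with top F, left I, right J : C ⥤ D, bottom G : B ⥤ D is a pushout square in Cat. Then: the function on objects induced by J is injective, the function on objects induced by the restriction of G to V is injective, these two functions have disjoint images, and every object of D lies in the image of one of them (so the objects of D are in bijection with ob C ⊔ ob V). -/
open CategoryTheory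

/-- The minimal cosieve of `B` generated by the image of `I : A ⥤ B`:
the set of objects of `B` that are the codomain of some arrow whose domain lies
in the image of `I`. -/
def minCosieve {A B : Type*} [Category A] [Category B] (I : A ⥤ B) : Set B :=
  {w : B | ∃ a : A, Nonempty (I.obj a ⟶ w)}

/-- The corestriction of `I : A ⥤ B` to the minimal cosieve generated by its image. -/
def inclW {A B : Type*} [Category A] [Category B] (I : A ⥤ B) :
    A ⥤ ObjectProperty.FullSubcategory (fun b => b ∈ minCosieve I) where
  obj a := ⟨I.obj a, a, ⟨𝟙 _⟩⟩
  map f := ObjectProperty.homMk (I.map f)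
  map_id a := by ext; exact I.map_id a
  map_comp f g := by ext; exact I.map_comp f g

/-- A functor `I : A ⥤ B` is a Dwyer map if it is a full subcategory inclusion
(fully faithful and injective on objects), it is a sieve inclusion (classified by a
functor `χ : B ⥤ 𝟚` with `χ⁻¹(0)` equal to the image of `I`, where `𝟚 = Fin 2` is
the two-object poset category `{0 < 1}`), and the corestriction of `I` to the
minimal cosieve `W` containing the image of `I` admits a right adjoint `R` whose
unit is the identity (a right adjoint left inverse). -/
structure IsDwyerMap {A B : Type*} [Category A] [Category B] (I : A ⥤ B) : Prop where
  full : I.Full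
  faithful : I.Faithful
  injOnObj : Function.Injective I.obj
  sieve : ∃ χ : B ⥤ Fin 2, ∀ b : B, χ.obj b = 0 ↔ b ∈ Set.range I.obj
  rali : ∃ (R : ObjectProperty.FullSubcategory (fun b => b ∈ minCosieve I) ⥤ A)
    (h : inclW I ⋙ R = 𝟭 A) (adj : inclW I ⊣ R), adj.unit = eqToHom h.symm


universe u

/-!
The objects functor `Cat → Type` is left adjoint to the codiscrete-category functor, so it
carries the pushout square in `Cat` to a pushout square of sets. Since `I` is injective on
objects, that pushout of sets is `ob C ⊔ (ob B ∖ ob A)`, which is the claim.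
-/

universe v

namespace CategoryTheory

namespace Cat

/-- `ULiftHom` places the codiscrete category in `Cat.{v, u}`, extending `Codiscrete.adj`
beyond `Cat.{0, u}`. -/
def objectsHomEquiv (C : Cat.{v, u}) (X : Type u) :
    (objects.obj C ⟶ X) ≃ (C ⟶ Cat.of (ULiftHom.{v} (Codiscrete X))) where
  toFun f := (Codiscrete.functor f ⋙ ULiftHom.up).toCatHom
  invFun F := ↾fun c => (F.toFunctor.obj c).as
  left_inv _ := rfl
  right_inv _ := Cat.ext (Functor.ext (fun _ => rfl) (fun _ _ _ => rfl))

instance : (objects : Cat.{v, u} ⥤ Type u).IsLeftAdjoint :=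
  (Adjunction.adjunctionOfEquivRight objectsHomEquiv (fun _ _ _ _ _ => rfl)).isLeftAdjoint

lemma isPushout_objects_map {A B C D : Cat.{v, u}} {f : A ⟶ B} {g : A ⟶ C} {h : B ⟶ D}
    {k : C ⟶ D} (sq : IsPushout f g h k) :
    IsPushout (objects.map f) (objects.map g) (objects.map h) (objects.map k) :=
  sq.map objects

end Cat

namespace Limits.Types

lemma injOn_compl_range_of_isPushout {X₁ X₂ X₃ X₄ : Type u} {t : X₁ ⟶ X₂} {l : X₁ ⟶ X₃}
    {r : X₂ ⟶ X₄} {b : X₃ ⟶ X₄} (h : IsPushout t l r b) : Set.InjOn b (Set.range l)ᶜ := by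
  classical
  obtain ⟨φ, -, hφb⟩ := h.exists_desc (↾fun _ => (none : Option X₃))
    (↾fun x => if x ∈ Set.range l then none else some x) (by ext x; simp)
  have hφ : ∀ x ∉ Set.range l, φ (b x) = some x := fun x hx => by
    simpa [-Set.mem_range, hx] using ConcreteCategory.congr_hom hφb x
  intro x hx y hy hxy
  exact Option.some_injective _ ((hφ x hx).symm.trans ((congrArg φ hxy).trans (hφ y hy)))

end Limits.Types

end CategoryTheory

/-- If `I : A ↪ B` is a Dwyer map with complementary cosieve `V` (the objects of `B`
not in the image of `I`) and the square with top `F`, left `I`, right `J`, bottom `G`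
is a pushout in `Cat`, then `J` is injective on objects, `G` is injective on the
objects of `V`, the images of these two object functions are disjoint, and they
jointly exhaust the objects of `D`; i.e. `ob D ≅ ob C ⊔ ob V`. -/
theorem pushout_obj_bijection
    {A B C D : Type u} [SmallCategory A] [SmallCategory B] [SmallCategory C] [SmallCategory D]
    (I : A ⥤ B) (F : A ⥤ C) (J : C ⥤ D) (G : B ⥤ D)
    (hI : IsDwyerMap I)
    (sq : IsPushout (C := Cat.{u,u}) (Z := Cat.of A) (X := Cat.of C) (Y := Cat.of B)
      (P := Cat.of D) F.toCatHom I.toCatHom J.toCatHom G.toCatHom) :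
    Function.Injective J.obj ∧
    Set.InjOn G.obj {b : B | b ∉ Set.range I.obj} ∧
    (∀ (c : C) (v : B), v ∉ Set.range I.obj → J.obj c ≠ G.obj v) ∧
    (∀ d : D, (∃ c : C, J.obj c = d) ∨ (∃ v : B, v ∉ Set.range I.obj ∧ G.obj v = d)) := by
  have hobj := Cat.isPushout_objects_map sq
  have hGJ := Limits.Types.pushoutCocone_inl_eq_inr_iff_of_isColimit hobj.flip.isColimit
    hI.injOnObj
  refine ⟨Limits.Types.pushoutCocone_inr_injective_of_isColimit hobj.flip.isColimit
      hI.injOnObj, Limits.Types.injOn_compl_range_of_isPushout hobj, fun c v hv hcv => ?_,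
    fun d => ?_⟩
  · obtain ⟨a, rfl, -⟩ := (hGJ v c).1 hcv.symm
    exact hv ⟨a, rfl⟩
  · obtain h | ⟨v, hv, hv'⟩ := Limits.Types.eq_or_eq_of_isPushout' hobj d
    exacts [.inl h, .inr ⟨v, hv', hv⟩]
end

section
/- Let I : A ↪ B be a Dwyer map with complementary cosieve V ⊆ B, let F : A ⥤ C be any functor, and suppose the square with top F, left I, right J : C ⥤ D, bottom G : B ⥤ D is a pushout square in Cat. Then for all objects v, v' of B lying in V, the map B(v,v') → D(Gv, Gv') induced by G is a bijection; that is, G restricted to the cosieve V is fully faithful into D. -/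
open CategoryTheory

universe u

/-!
Morphisms of `B` out of the cosieve `V` stay in `V`, so nothing glued on along `I` can create
new morphisms between objects of `V`. To see this without computing the pushout, glue `C` and
`V` together along `D`: objects `C ⊕ V`, morphisms out of `c` taken in `D` (from `J c` to `J c'`
or `G v`), `B(v, v')` between objects of `V`, and none from `V` to `C`. This category receives
compatible functors from `C` and from `B` (the part of `B` in the image of `I` goes to `C`
through `F`) and projects back onto `D` compatibly with `J` and `G`. By the universal property
`D` is therefore a retract of it; the section `D ⥤ Gluing` is faithful, and its composite with
`G` restricted to `V` is the fully faithful inclusion of `V`.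
-/

universe w u₁ u₂ u₃

namespace CategoryTheory

def Gluing {C : Type u₁} {V : Type u₂} {D : Type u₃} [Category C] [Category.{w} V]
    [Category.{w} D] (_J : C ⥤ D) (_K : V ⥤ D) : Type (max u₁ u₂) :=
  C ⊕ V

namespace Gluing

variable {C : Type u₁} {V : Type u₂} {D : Type u₃} [Category C] [Category.{w} V]
  [Category.{w} D] {J : C ⥤ D} {K : V ⥤ D}

def projObj : Gluing J K → D
  | .inl c => J.obj c
  | .inr v => K.obj v

def Hom : Gluing J K → Gluing J K → Type w
  | .inl c, Y => J.obj c ⟶ projObj Y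
  | .inr _, .inl _ => PEmpty
  | .inr v, .inr v' => v ⟶ v'

def Hom.proj : ∀ {X Y : Gluing J K}, Hom X Y → (projObj X ⟶ projObj Y)
  | .inl _, _, f => f
  | .inr _, .inr _, f => K.map f
  | .inr _, .inl _, f => f.elim

def Hom.id : ∀ X : Gluing J K, Hom X X
  | .inl c => 𝟙 (J.obj c)
  | .inr v => 𝟙 v

def Hom.comp : ∀ {X Y Z : Gluing J K}, Hom X Y → Hom Y Z → Hom X Z
  | .inl _, _, _, f, g => f ≫ g.proj
  | .inr _, .inr _, .inr _, f, g => f ≫ g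
  | .inr _, .inl _, _, f, _ => f.elim
  | .inr _, .inr _, .inl _, _, g => g.elim

lemma Hom.proj_id : ∀ X : Gluing J K, (Hom.id X).proj = 𝟙 (projObj X)
  | .inl _ => rfl
  | .inr _ => K.map_id _

lemma Hom.proj_comp : ∀ {X Y Z : Gluing J K} (f : Hom X Y) (g : Hom Y Z),
    (f.comp g).proj = f.proj ≫ g.proj
  | .inl _, _, _, _, _ => rfl
  | .inr _, .inr _, .inr _, _, _ => K.map_comp _ _
  | .inr _, .inl _, _, f, _ => f.elim
  | .inr _, .inr _, .inl _, _, g => g.elim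

instance : Category (Gluing J K) where
  Hom := Hom
  id := Hom.id
  comp := Hom.comp
  id_comp {X Y} f := by
    cases X <;> cases Y
    all_goals first | exact f.elim | exact Category.id_comp _
  comp_id {X Y} f := by
    cases X with
    | inl => exact (congrArg _ (Hom.proj_id Y)).trans (Category.comp_id _)
    | inr => cases Y; exact f.elim; exact Category.comp_id _
  assoc {W X Y Z} f g h := by
    cases W with
    | inl => exact (Category.assoc _ _ _).trans (congrArg _ (Hom.proj_comp g h).symm)
    | inr =>
      cases X; exact f.elim
      cases Y; exact g.elim
      cases Z; exact h.elim
      exact Category.assoc _ _ _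

variable (J K)

def proj : Gluing J K ⥤ D where
  obj := projObj
  map := Hom.proj
  map_id := Hom.proj_id
  map_comp := Hom.proj_comp

def inl : C ⥤ Gluing J K where
  obj := Sum.inl
  map f := J.map f
  map_id _ := J.map_id _
  map_comp _ _ := J.map_comp _ _

def inr : V ⥤ Gluing J K where
  obj := Sum.inr
  map f := f
  map_id _ := rfl
  map_comp _ _ := rfl

lemma inl_comp_proj : inl J K ⋙ proj J K = J :=
  rfl

def fullyFaithfulInr : (inr J K).FullyFaithful where
  preimage {v v'} f := (f : v ⟶ v')
  map_preimage _ := rfl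
  preimage_map _ := rfl

lemma proj_map_injective_of_eq_inl {X : Gluing J K} {c : C} (hX : X = (inl J K).obj c)
    (Y : Gluing J K) :
    Function.Injective
      ((proj J K).map : (X ⟶ Y) → ((proj J K).obj X ⟶ (proj J K).obj Y)) := by
  subst hX
  exact fun _ _ h => h

def homOfEqInl {X Y : Gluing J K} {c : C} (hX : X = (inl J K).obj c)
    (g : (proj J K).obj X ⟶ (proj J K).obj Y) : X ⟶ Y := by
  subst hX
  exact g

lemma proj_map_homOfEqInl {X Y : Gluing J K} {c : C} (hX : X = (inl J K).obj c)
    (g : (proj J K).obj X ⟶ (proj J K).obj Y) : (proj J K).map (homOfEqInl J K hX g) = g := by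
  subst hX
  rfl

lemma functor_ext_of_comp_proj {E : Type*} [Category E] {H₁ H₂ : E ⥤ Gluing J K}
    (hobj : ∀ e, H₁.obj e = H₂.obj e) (hinl : ∀ e, ∃ c, H₁.obj e = (inl J K).obj c)
    (h : H₁ ⋙ proj J K = H₂ ⋙ proj J K) : H₁ = H₂ := by
  refine Functor.ext hobj fun e e' f => ?_
  refine proj_map_injective_of_eq_inl J K (hinl e).choose_spec _ ?_
  simpa [eqToHom_map] using Functor.congr_hom h f

end Gluing

lemma IsPushout.desc_comp_eq_id {𝒞 : Type*} [Category 𝒞] {Z X Y P W : 𝒞}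
    {f : Z ⟶ X} {g : Z ⟶ Y} {inl : X ⟶ P} {inr : Y ⟶ P} (sq : IsPushout f g inl inr)
    (h : X ⟶ W) (k : Y ⟶ W) (w : f ≫ h = g ≫ k) (p : W ⟶ P) (hp : h ≫ p = inl)
    (kp : k ≫ p = inr) : sq.desc h k w ≫ p = 𝟙 P :=
  sq.hom_ext (by simp [hp]) (by simp [kp])

lemma mem_of_hom_of_classifier {B : Type*} [Category B] {S : B → Prop} (χ : B ⥤ Fin 2)
    (hχ : ∀ b, χ.obj b = 0 ↔ S b) {b b' : B} (f : b ⟶ b') (h : S b') : S b :=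
  (hχ b).1 (nonpos_iff_eq_zero.1 ((hχ b').2 h ▸ leOfHom (χ.map f)))

abbrev rangeCompl {A B : Type*} [Category A] [Category B] (I : A ⥤ B) : ObjectProperty B :=
  fun b => b ∉ Set.range I.obj

section PushoutModel

variable {A : Type*} {B : Type u₂} {C : Type*} {D : Type u₃} [Category A] [Category.{w} B]
  [Category C] [Category.{w} D] (I : A ⥤ B) (F : A ⥤ C) (J : C ⥤ D) (G : B ⥤ D)

abbrev PushoutModel : Type _ :=
  Gluing J ((rangeCompl I).ι ⋙ G)

open Classical in
noncomputable def modelObj (b : B) : PushoutModel I J G :=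
  if h : b ∈ Set.range I.obj then (Gluing.inl _ _).obj (F.obj (Set.mem_range.1 h).choose)
  else (Gluing.inr _ _).obj ⟨b, h⟩

variable {I F J G}

lemma modelObj_of_mem {b : B} (h : b ∈ Set.range I.obj) :
    modelObj I F J G b = (Gluing.inl _ _).obj (F.obj (Set.mem_range.1 h).choose) :=
  dif_pos h

lemma modelObj_of_not_mem {b : B} (h : b ∉ Set.range I.obj) :
    modelObj I F J G b = (Gluing.inr _ _).obj ⟨b, h⟩ :=
  dif_neg h

lemma modelObj_obj (hI : Function.Injective I.obj) (a : A) :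
    modelObj I F J G (I.obj a) = (Gluing.inl _ _).obj (F.obj a) := by
  have h : I.obj a ∈ Set.range I.obj := ⟨a, rfl⟩
  rw [modelObj_of_mem h, hI (Set.mem_range.1 h).choose_spec]

lemma proj_obj_modelObj (hw : F ⋙ J = I ⋙ G) (b : B) :
    (Gluing.proj _ _).obj (modelObj I F J G b) = G.obj b := by
  by_cases h : b ∈ Set.range I.obj
  · rw [modelObj_of_mem h]
    exact (Functor.congr_obj hw _).trans (congrArg G.obj (Set.mem_range.1 h).choose_spec)
  · rw [modelObj_of_not_mem h]
    rfl

variable (hS : ∀ {b b' : B}, (b ⟶ b') → b' ∈ Set.range I.obj → b ∈ Set.range I.obj)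
  (hw : F ⋙ J = I ⋙ G)

open Classical in
noncomputable def modelMap {b b' : B} (f : b ⟶ b') : modelObj I F J G b ⟶ modelObj I F J G b' :=
  if h : b ∈ Set.range I.obj then
    Gluing.homOfEqInl _ _ (modelObj_of_mem h)
      (eqToHom (proj_obj_modelObj hw b) ≫ G.map f ≫ eqToHom (proj_obj_modelObj hw b').symm)
  else
    eqToHom (modelObj_of_not_mem h) ≫
      (Gluing.inr _ _).map
        (ObjectProperty.homMk f : ⟨b, h⟩ ⟶ ⟨b', fun h' => h (hS f h')⟩) ≫
      eqToHom (modelObj_of_not_mem _).symm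

lemma proj_map_modelMap {b b' : B} (f : b ⟶ b') :
    (Gluing.proj _ _).map (modelMap hS hw f) =
      eqToHom (proj_obj_modelObj hw b) ≫ G.map f ≫ eqToHom (proj_obj_modelObj hw b').symm := by
  unfold modelMap
  split_ifs
  · exact Gluing.proj_map_homOfEqInl _ _ _ _
  · simp only [Functor.map_comp, eqToHom_map]
    rfl

lemma modelMap_of_not_mem {b b' : B} (f : b ⟶ b') (h : b ∉ Set.range I.obj)
    (h' : b' ∉ Set.range I.obj) :
    modelMap hS hw f = eqToHom (modelObj_of_not_mem h) ≫
      (Gluing.inr _ _).map (ObjectProperty.homMk f : ⟨b, h⟩ ⟶ ⟨b', h'⟩) ≫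
      eqToHom (modelObj_of_not_mem h').symm :=
  dif_neg h

variable (I F J G) in
noncomputable def modelFunctor : B ⥤ PushoutModel I J G where
  obj := modelObj I F J G
  map := modelMap hS hw
  map_id b := by
    by_cases h : b ∈ Set.range I.obj
    · refine Gluing.proj_map_injective_of_eq_inl _ _ (modelObj_of_mem h) _ ?_
      simp [proj_map_modelMap]
    · simp only [modelMap_of_not_mem hS hw _ h h]
      erw [Functor.map_id]
      simp
  map_comp {b b' b''} f g := by
    by_cases h : b ∈ Set.range I.obj
    · refine Gluing.proj_map_injective_of_eq_inl _ _ (modelObj_of_mem h) _ ?_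
      simp [proj_map_modelMap]
    · have h' : b' ∉ Set.range I.obj := fun h' => h (hS f h')
      have h'' : b'' ∉ Set.range I.obj := fun h'' => h' (hS g h'')
      simp only [modelMap_of_not_mem hS hw _ h h', modelMap_of_not_mem hS hw _ h' h'',
        modelMap_of_not_mem hS hw _ h h'', Category.assoc, eqToHom_trans_assoc, eqToHom_refl,
        Category.id_comp]
      rw [← Functor.map_comp_assoc]
      rfl

lemma modelFunctor_comp_proj : modelFunctor I F J G hS hw ⋙ Gluing.proj _ _ = G :=
  Functor.ext (proj_obj_modelObj hw) fun _ _ f => proj_map_modelMap hS hw f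

lemma ι_comp_modelFunctor : (rangeCompl I).ι ⋙ modelFunctor I F J G hS hw = Gluing.inr _ _ :=
  Functor.ext (fun v => modelObj_of_not_mem v.2) fun v v' _ =>
    modelMap_of_not_mem hS hw _ v.2 v'.2

lemma inl_eq_modelFunctor (hI : Function.Injective I.obj) :
    F ⋙ Gluing.inl _ _ = I ⋙ modelFunctor I F J G hS hw := by
  refine Gluing.functor_ext_of_comp_proj _ _ (fun a => (modelObj_obj hI a).symm)
    (fun a => ⟨_, rfl⟩) ?_
  rw [Functor.assoc, Functor.assoc, Gluing.inl_comp_proj, modelFunctor_comp_proj, hw]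

end PushoutModel

end CategoryTheory

/-- If `I : A ↪ B` is a Dwyer map with complementary cosieve `V` (the objects of `B`
not in the image of `I`) and the square with top `F`, left `I`, right `J`, bottom `G`
is a pushout in `Cat`, then `G` is fully faithful on `V`: for all objects `v, v'` of
`B` lying in `V`, the induced map `B(v,v') → D(Gv,Gv')` is a bijection. -/
theorem pushout_inr_fullyFaithful_on_cosieve
    {A B C D : Type u} [SmallCategory A] [SmallCategory B] [SmallCategory C] [SmallCategory D]
    (I : A ⥤ B) (F : A ⥤ C) (J : C ⥤ D) (G : B ⥤ D)
    (hI : IsDwyerMap I)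
    (sq : IsPushout (C := Cat.{u,u}) (Z := Cat.of A) (X := Cat.of C) (Y := Cat.of B)
      (P := Cat.of D) F.toCatHom I.toCatHom J.toCatHom G.toCatHom) :
    ∀ v v' : B, v ∉ Set.range I.obj → v' ∉ Set.range I.obj →
      Function.Bijective (fun f : v ⟶ v' => G.map f) := by
  intro v v' hv hv'
  have hw : F ⋙ J = I ⋙ G := congrArg Cat.Hom.toFunctor sq.w
  obtain ⟨χ, hχ⟩ := hI.sieve
  have hS := fun {b b' : B} (f : b ⟶ b') => mem_of_hom_of_classifier χ hχ f
  let Φ : D ⥤ PushoutModel I J G := (sq.desc (Gluing.inl _ _).toCatHom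
    (modelFunctor I F J G hS hw).toCatHom
    (Cat.Hom.ext (inl_eq_modelFunctor hS hw hI.injOnObj))).toFunctor
  have hΦ : Φ ⋙ Gluing.proj _ _ = 𝟭 D := congrArg Cat.Hom.toFunctor
    (sq.desc_comp_eq_id _ _ _ (Gluing.proj _ _).toCatHom rfl
      (Cat.Hom.ext (modelFunctor_comp_proj hS hw)))
  have hGΦ : G ⋙ Φ = modelFunctor I F J G hS hw :=
    congrArg Cat.Hom.toFunctor (sq.inr_desc _ _ _)
  have := Functor.Faithful.of_comp_eq hΦ
  have hVΦ : ((rangeCompl I).ι ⋙ G) ⋙ Φ = Gluing.inr _ _ := by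
    rw [Functor.assoc, hGΦ, ι_comp_modelFunctor]
  have hFF : ((rangeCompl I).ι ⋙ G).FullyFaithful :=
    .ofCompFaithful (G := Φ) ((Gluing.fullyFaithfulInr _ _).ofIso (eqToIso hVΦ.symm))
  exact (hFF.map_bijective ⟨v, hv⟩ ⟨v', hv'⟩).comp InducedCategory.homEquiv.symm.bijective
end

section
/- Let I : A ↪ B be a Dwyer map with complementary cosieve V and minimal cosieve W ⊇ A, let F : A ⥤ C be any functor, and suppose the square with top F, left I, right J : C ⥤ D, bottom G : B ⥤ D is a pushout square in Cat. Then for every object c of C and every object v of B lying in V, the hom-set D(Gv, Jc) is empty; and if moreover v does not lie in W, then the hom-set D(Jc, Gv) is also empty. -/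
open CategoryTheory

universe u

/-!
Both hom-sets are detected by cosieves. A pair of cosieves of `C` and `B` that agree on `A`
glues, by the universal property of the pushout, to a functor `D ⥤ Prop`, i.e. to a cosieve
of `D` whose trace along `J` and `G` is the given pair. The complement `V` of the sieve
glued with the empty cosieve of `C` contains `Gv` but no `Jc`, so no arrow `Gv ⟶ Jc` exists;
the minimal cosieve `W` glued with all of `C` contains every `Jc` but not `Gv` when `v ∉ W`,
so no arrow `Jc ⟶ Gv` exists.
-/

namespace CategoryTheory.ObjectProperty

variable {C : Type*} [Category C]

def IsCosieve (P : ObjectProperty C) : Prop :=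
  ∀ ⦃X Y : C⦄, (X ⟶ Y) → P X → P Y

def IsCosieve.classifier {P : ObjectProperty C} (hP : P.IsCosieve) : C ⥤ ULift.{u} Prop where
  obj X := ULift.up (P X)
  map f := homOfLE (hP f)

theorem isCosieve_of_functor (H : C ⥤ ULift.{u} Prop) :
    IsCosieve (fun X => (H.obj X).down) :=
  fun _ _ f => leOfHom (H.map f)

end CategoryTheory.ObjectProperty

open ObjectProperty

theorem isCosieve_minCosieve {A B : Type*} [Category A] [Category B] (I : A ⥤ B) :
    IsCosieve (· ∈ minCosieve I) := by
  rintro b b' f ⟨a, ⟨k⟩⟩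
  exact ⟨a, ⟨k ≫ f⟩⟩

theorem isCosieve_notMem_range_of_sieve {A B : Type*} [Category A] [Category B] {I : A ⥤ B}
    (χ : B ⥤ Fin 2) (hχ : ∀ b : B, χ.obj b = 0 ↔ b ∈ Set.range I.obj) :
    IsCosieve (· ∉ Set.range I.obj) := by
  intro b b' f hb hb'
  rw [← hχ] at hb hb'
  have := leOfHom (χ.map f)
  omega

theorem CategoryTheory.IsPushout.exists_isCosieve_extension
    {A B C D : Type u} [SmallCategory A] [SmallCategory B] [SmallCategory C] [SmallCategory D]
    {I : A ⥤ B} {F : A ⥤ C} {J : C ⥤ D} {G : B ⥤ D}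
    (sq : IsPushout (C := Cat.{u,u}) (Z := Cat.of A) (X := Cat.of C) (Y := Cat.of B)
      (P := Cat.of D) F.toCatHom I.toCatHom J.toCatHom G.toCatHom)
    {P : ObjectProperty C} {Q : ObjectProperty B} (hP : P.IsCosieve) (hQ : Q.IsCosieve)
    (hPQ : ∀ a, P (F.obj a) ↔ Q (I.obj a)) :
    ∃ R : ObjectProperty D, R.IsCosieve ∧ (∀ c, R (J.obj c) ↔ P c) ∧ ∀ b, R (G.obj b) ↔ Q b := by
  have w : F.toCatHom ≫ hP.classifier.toCatHom = I.toCatHom ≫ hQ.classifier.toCatHom := by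
    refine Cat.ext (Functor.ext (fun a => ?_) (fun _ _ _ => ?_))
    · exact congrArg ULift.up (propext (hPQ a))
    · exact Subsingleton.elim (h := Preorder.subsingleton_hom (α := ULift.{u} Prop) _ _) _ _
  let H := (sq.desc _ _ w).toFunctor
  have hJ : J ⋙ H = hP.classifier := congrArg Cat.Hom.toFunctor (sq.inl_desc _ _ w)
  have hG : G ⋙ H = hQ.classifier := congrArg Cat.Hom.toFunctor (sq.inr_desc _ _ w)
  exact ⟨fun d => (H.obj d).down, isCosieve_of_functor H,
    fun c => iff_of_eq (congrArg ULift.down (Functor.congr_obj hJ c)),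
    fun b => iff_of_eq (congrArg ULift.down (Functor.congr_obj hG b))⟩

/-- Let `I : A ↪ B` be a Dwyer map with complementary cosieve `V` (objects of `B`
outside the image of `I`) and minimal cosieve `W = minCosieve I`, and let the square
with top `F`, left `I`, right `J`, bottom `G` be a pushout in `Cat`.  Then for every
object `c` of `C` and every `v` in `V`, the hom-set `D(Gv, Jc)` is empty; and if
moreover `v ∉ W`, then `D(Jc, Gv)` is also empty. -/
theorem pushout_hom_empty
    {A B C D : Type u} [SmallCategory A] [SmallCategory B] [SmallCategory C] [SmallCategory D]
    (I : A ⥤ B) (F : A ⥤ C) (J : C ⥤ D) (G : B ⥤ D)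
    (hI : IsDwyerMap I)
    (sq : IsPushout (C := Cat.{u,u}) (Z := Cat.of A) (X := Cat.of C) (Y := Cat.of B)
      (P := Cat.of D) F.toCatHom I.toCatHom J.toCatHom G.toCatHom)
    (c : C) (v : B) (hvV : v ∉ Set.range I.obj) :
    IsEmpty (G.obj v ⟶ J.obj c) ∧ (v ∉ minCosieve I → IsEmpty (J.obj c ⟶ G.obj v)) := by
  obtain ⟨χ, hχ⟩ := hI.sieve
  refine ⟨⟨fun f => ?_⟩, fun hvW => ⟨fun f => ?_⟩⟩
  · obtain ⟨R, hR, hRJ, hRG⟩ := sq.exists_isCosieve_extension (P := fun _ => False)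
      (fun _ _ _ => id) (isCosieve_notMem_range_of_sieve χ hχ) (fun a => by simp)
    exact (hRJ c).1 (hR f ((hRG v).2 hvV))
  · obtain ⟨R, hR, hRJ, hRG⟩ := sq.exists_isCosieve_extension (P := fun _ => True)
      (fun _ _ _ => id) (isCosieve_minCosieve I) (fun a => iff_of_true trivial ⟨a, ⟨𝟙 _⟩⟩)
    exact hvW ((hRG v).1 (hR f ((hRJ c).2 trivial)))
end
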